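/- arXiv:1805.09682 — 6 statements merged into one kernel-verified Lean document; each statement's English description precedes it below -/
import Mathlib

section
/- Order-statistics sandwich lemma: Let m, q, b be integers with 0 ≤ q ≤ b ≤ ⌈m/2⌉ − 1. Let ṽ_1, …, ṽ_m be real numbers and suppose there is a subset S ⊆ {1, …, m} with |S| = m − q such that the multiset of correct values {v_1, …, v_{m−q}} equals the multiset {ṽ_i : i ∈ S} (i.e., at most q of the ṽ_i are Byzantine). Then for every integer i with 1 ≤ i ≤ m − 2b, one has v_{(b−q+i):(m−q)} ≤ ṽ_{(b+i):m} ≤ v_{(b+i):(m−q)}. -/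
/-!
The correct values form a sub-multiset of size `m - q` of the received ones, so after sorting
they are a sublist `K` of the sorted received list `L`. A strictly monotone index map
`Fin (m - q) → Fin m` moves every index up by at least `0` and at most `q`, so
`L[j] ≤ K[j] ≤ L[j + q]` for each `j`; reading this at `j = b + i - 1` and at
`j = b - q + i - 1` gives the two inequalities.
-/

/-- The `k`-th smallest element (1-indexed order statistic) of `u 1, …, u m`. -/
noncomputable def orderStat {m : ℕ} (u : Fin m → ℝ) (k : ℕ) : ℝ :=
  ((Multiset.map u Finset.univ.val).sort (· ≤ ·)).getD (k - 1) 0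

namespace Fin

variable {k n : ℕ} {f : Fin k → Fin n}

theorem le_val_of_strictMono (hf : StrictMono f) (i : Fin k) : (i : ℕ) ≤ f i := by
  have hsub : (Finset.Iic i).image f ⊆ Finset.Iic (f i) := by
    intro x hx
    obtain ⟨a, ha, rfl⟩ := Finset.mem_image.mp hx
    exact Finset.mem_Iic.mpr (hf.monotone (Finset.mem_Iic.mp ha))
  have hcard := Finset.card_le_card hsub
  rwa [Finset.card_image_of_injective _ hf.injective, Fin.card_Iic, Fin.card_Iic,
    add_le_add_iff_right] at hcard

theorem val_le_add_sub_of_strictMono (hf : StrictMono f) (i : Fin k) :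
    (f i : ℕ) ≤ i + (n - k) := by
  have hrev : StrictMono (Fin.rev ∘ f ∘ Fin.rev) := fun a b hab =>
    Fin.rev_lt_rev.mpr (hf (Fin.rev_lt_rev.mpr hab))
  have := le_val_of_strictMono hrev (Fin.rev i)
  simp only [Function.comp_apply, Fin.rev_rev, Fin.val_rev] at this
  omega

end Fin

namespace List

variable {α : Type*} [Preorder α] {K L : List α}

theorem Sublist.getElem_le_getElem_of_sortedLE (h : K <+ L) (hL : L.SortedLE) (j : ℕ)
    (hj : j < K.length) : L[j]'(hj.trans_le h.length_le) ≤ K[j] := by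
  obtain ⟨f, hf⟩ := sublist_iff_exists_fin_orderEmbedding_get_eq.mp h
  rw [← get_eq_getElem (i := ⟨j, hj⟩), hf]
  exact hL.monotone_get (Fin.le_val_of_strictMono f.strictMono ⟨j, hj⟩)

theorem Sublist.getElem_le_getElem_add_of_sortedLE (h : K <+ L) (hL : L.SortedLE) (j : ℕ)
    (hj : j < K.length) :
    K[j] ≤ L[j + (L.length - K.length)]'(by have := h.length_le; omega) := by
  obtain ⟨f, hf⟩ := sublist_iff_exists_fin_orderEmbedding_get_eq.mp h
  rw [← get_eq_getElem (i := ⟨j, hj⟩), hf]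
  exact hL.monotone_get (Fin.val_le_add_sub_of_strictMono f.strictMono ⟨j, hj⟩)

end List

theorem Multiset.sort_sublist_sort_of_le {α : Type*} [LinearOrder α] {s t : Multiset α}
    (h : s ≤ t) : List.Sublist (s.sort (· ≤ ·)) (t.sort (· ≤ ·)) := by
  refine List.sublist_of_subperm_of_pairwise ?_ (Multiset.pairwise_sort _ _)
    (Multiset.pairwise_sort _ _)
  rwa [← Multiset.coe_le, Multiset.sort_eq, Multiset.sort_eq]

theorem orderStat_sandwich_of_map_le {m n : ℕ} (u : Fin m → ℝ) (w : Fin n → ℝ)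
    (h : Multiset.map u Finset.univ.val ≤ Multiset.map w Finset.univ.val)
    (k : ℕ) (hk : 1 ≤ k) (hkm : k ≤ m) :
    orderStat w k ≤ orderStat u k ∧ orderStat u k ≤ orderStat w (k + (n - m)) := by
  unfold orderStat
  set K := (Multiset.map u Finset.univ.val).sort (· ≤ ·)
  set L := (Multiset.map w Finset.univ.val).sort (· ≤ ·)
  have hsub : K.Sublist L := Multiset.sort_sublist_sort_of_le h
  have hL : L.SortedLE := List.sortedLE_iff_pairwise.mpr (Multiset.pairwise_sort _ _)
  have hKlen : K.length = m := by simp [K]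
  have hLlen : L.length = n := by simp [L]
  have hKL := hsub.length_le
  have hj : k - 1 < K.length := by omega
  have hidx : k + (n - m) - 1 = k - 1 + (L.length - K.length) := by omega
  rw [hidx, List.getD_eq_getElem _ _ hj, List.getD_eq_getElem _ _ (hj.trans_le hKL),
    List.getD_eq_getElem _ _ (by omega)]
  exact ⟨hsub.getElem_le_getElem_of_sortedLE hL _ hj,
    hsub.getElem_le_getElem_add_of_sortedLE hL _ hj⟩

theorem orderStat_sandwich_general (m q b : ℕ) (hqb : q ≤ b)
    (vt : Fin m → ℝ) (v : Fin (m - q) → ℝ)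
    (hS : ∃ S : Finset (Fin m), S.card = m - q ∧
      Multiset.map v Finset.univ.val = Multiset.map vt S.val) :
    ∀ i : ℕ, 1 ≤ i → i ≤ m - 2 * b →
      orderStat v (b - q + i) ≤ orderStat vt (b + i) ∧
      orderStat vt (b + i) ≤ orderStat v (b + i) := by
  intro i hi1 hi2
  obtain ⟨S, -, hSv⟩ := hS
  have hle : Multiset.map v Finset.univ.val ≤ Multiset.map vt Finset.univ.val :=
    hSv ▸ Multiset.map_le_map (Finset.val_le_iff.mpr (Finset.subset_univ S))
  have hshift : b - q + i + (m - (m - q)) = b + i := by omega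
  constructor
  · simpa only [hshift] using (orderStat_sandwich_of_map_le v vt hle (b - q + i) (by omega)
      (by omega)).2
  · exact (orderStat_sandwich_of_map_le v vt hle (b + i) (by omega) (by omega)).1

/-- Order-statistics sandwich lemma: if among `ṽ_1, …, ṽ_m` at most `q` values are
Byzantine (i.e. there is a subset `S` of indices of size `m - q` on which `ṽ`
agrees, as a multiset, with the correct values `v_1, …, v_{m-q}`), and
`0 ≤ q ≤ b ≤ ⌈m/2⌉ - 1`, then for every `1 ≤ i ≤ m - 2b`,
`v_{(b-q+i):(m-q)} ≤ ṽ_{(b+i):m} ≤ v_{(b+i):(m-q)}`. -/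
theorem orderStat_sandwich (m q b : ℕ) (hqb : q ≤ b) (hb : b ≤ (m + 1) / 2 - 1)
    (vt : Fin m → ℝ) (v : Fin (m - q) → ℝ)
    (hS : ∃ S : Finset (Fin m), S.card = m - q ∧
      Multiset.map v Finset.univ.val = Multiset.map vt S.val) :
    ∀ i : ℕ, 1 ≤ i → i ≤ m - 2 * b →
      orderStat v (b - q + i) ≤ orderStat vt (b + i) ∧
      orderStat vt (b + i) ≤ orderStat v (b + i) :=
  orderStat_sandwich_general m q b hqb vt v hS
end

section
/- Deterministic bound for Phocas relative to the trimmed mean: Let m, q, b be integers with 0 ≤ q ≤ b ≤ ⌈m/2⌉ − 1. Let ṽ_1, …, ṽ_m be real numbers whose multiset contains the multiset of correct values {v_1, …, v_{m−q}} as a sub-multiset, let T = Trmean_b(ṽ_1,…,ṽ_m), and let g be any real number. Then (Phocas_b(ṽ_1,…,ṽ_m) − T)² ≤ (2/(m−q)) Σ_{i=1}^{m−q} (v_i − g)² + 2(g − T)². -/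
/-- The `b`-trimmed mean of `u 1, …, u m`:
`(1/(m-2b)) ∑_{k=b+1}^{m-b} u_{k:m}`. -/
noncomputable def trmean {m : ℕ} (b : ℕ) (u : Fin m → ℝ) : ℝ :=
  (∑ k ∈ Finset.Icc (b + 1) (m - b), orderStat u k) / ((m : ℝ) - 2 * b)

/-- The list `l` sorted by (nondecreasing) distance to `y`
(a fixed, consistent tie-breaking rule given by a stable merge sort). -/
noncomputable def sortByDist (y : ℝ) (l : List ℝ) : List ℝ :=
  l.mergeSort (fun a b => decide (|a - y| ≤ |b - y|))

/-- `nearest y u k` is the `k`-th closest element to `y` (1-indexed) among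
`u 1, …, u m`, ties broken by a fixed consistent rule. -/
noncomputable def nearest (y : ℝ) {m : ℕ} (u : Fin m → ℝ) (k : ℕ) : ℝ :=
  (sortByDist y (List.ofFn u)).getD (k - 1) 0

/-- Phocas: the average of the `m - b` elements of `u 1, …, u m` nearest to the
`b`-trimmed mean. -/
noncomputable def phocas {m : ℕ} (b : ℕ) (u : Fin m → ℝ) : ℝ :=
  (∑ k ∈ Finset.Icc 1 (m - b), nearest (trmean b u) u k) / ((m : ℝ) - b)

/-!
Let `y` be the trimmed mean and `p = m - b ≤ m - q`. By Cauchy–Schwarz, `(Phocas - y)²` is at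
most the mean squared distance to `y` of the `p` points nearest to `y`. Since the correct values
form a sub-multiset, the `p` smallest squared distances overall are bounded termwise by the `p`
smallest among the correct values, whose mean is at most the mean over all `m - q` correct
values. Finally `(x - y)² ≤ 2 (x - g)² + 2 (g - y)²` pointwise.
-/
namespace List

variable {α : Type*}

theorem sum_take_cons_le_sum_take [AddCommMonoid α] [PartialOrder α] [IsOrderedAddMonoid α]
    {a : α} {l : List α} (ha : ∀ x ∈ l, a ≤ x) {p : ℕ} (hp : p ≤ l.length) :
    ((a :: l).take p).sum ≤ (l.take p).sum := by
  cases p with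
  | zero => simp
  | succ k =>
    rw [take_succ_cons, sum_cons, sum_take_succ l k hp, add_comm]
    exact add_le_add_right (ha _ (getElem_mem _)) _

theorem Sublist.sum_take_le_sum_take [AddCommMonoid α] [PartialOrder α] [IsOrderedAddMonoid α]
    {l₁ l₂ : List α} (h : l₁ <+ l₂) (hl₂ : l₂.Pairwise (· ≤ ·)) {p : ℕ}
    (hp : p ≤ l₁.length) :
    (l₂.take p).sum ≤ (l₁.take p).sum := by
  induction h generalizing p with
  | slnil => rfl
  | @cons l₁ l₂ a h ih =>
    rw [pairwise_cons] at hl₂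
    exact (sum_take_cons_le_sum_take hl₂.1 (hp.trans h.length_le)).trans (ih hl₂.2 hp)
  | @cons_cons l₁ l₂ a h ih =>
    cases p with
    | zero => simp
    | succ k =>
      simp only [take_succ_cons, sum_cons]
      exact add_le_add_right (ih (pairwise_cons.1 hl₂).2 (by simpa using hp)) a

theorem length_nsmul_sum_le_length_nsmul_sum [AddCommMonoid α] [PartialOrder α]
    [IsOrderedAddMonoid α] {l₁ l₂ : List α} (h : ∀ x ∈ l₁, ∀ y ∈ l₂, x ≤ y) :
    l₂.length • l₁.sum ≤ l₁.length • l₂.sum := by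
  induction l₁ with
  | nil => simp
  | cons a l ih =>
    rw [sum_cons, nsmul_add, length_cons, succ_nsmul']
    exact add_le_add (card_nsmul_le_sum l₂ a (h a mem_cons_self))
      (ih fun x hx => h x (mem_cons_of_mem a hx))

theorem length_nsmul_sum_take_le [AddCommMonoid α] [PartialOrder α] [IsOrderedAddMonoid α]
    {l : List α} (hl : l.Pairwise (· ≤ ·)) {p : ℕ} (hp : p ≤ l.length) :
    l.length • (l.take p).sum ≤ p • l.sum := by
  have hsplit := take_append_drop p l
  rw [← hsplit, pairwise_append] at hl
  have hdrop := length_nsmul_sum_le_length_nsmul_sum hl.2.2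
  rw [length_take_of_le hp, length_drop] at hdrop
  calc l.length • (l.take p).sum = p • (l.take p).sum + (l.length - p) • (l.take p).sum := by
        rw [← add_nsmul, Nat.add_sub_cancel' hp]
    _ ≤ p • (l.take p).sum + p • (l.drop p).sum := add_le_add le_rfl hdrop
    _ = p • l.sum := by rw [← nsmul_add, ← sum_append, hsplit]

theorem sq_sum_div_length_sub_le [Field α] [LinearOrder α] [IsStrictOrderedRing α]
    {l : List α} (hl : l ≠ []) (c : α) :
    (l.sum / l.length - c) ^ 2 ≤ (l.map fun x => (x - c) ^ 2).sum / l.length := by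
  have hn : (l.length : α) ≠ 0 := by simpa using hl
  have h := sum_div_card_sq_le_sum_sq_div_card (s := Finset.univ)
    (f := fun i : Fin l.length => l[i.1] - c)
  rw [Finset.sum_sub_distrib, Fin.sum_univ_getElem,
    Fin.sum_univ_fun_getElem (f := fun x => (x - c) ^ 2)] at h
  simp only [Finset.sum_const, Finset.card_univ, Fintype.card_fin, nsmul_eq_mul] at h
  convert h using 2
  field_simp

end List

theorem sortByDist_perm (y : ℝ) (l : List ℝ) : (sortByDist y l).Perm l :=
  List.mergeSort_perm _ _

theorem sortByDist_pairwise (y : ℝ) (l : List ℝ) :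
    (sortByDist y l).Pairwise fun a b => |a - y| ≤ |b - y| := by
  simpa [sortByDist] using
    List.pairwise_mergeSort (le := fun a b : ℝ => decide (|a - y| ≤ |b - y|))
    (fun a b c hab hbc => by simp only [decide_eq_true_eq] at *; exact hab.trans hbc)
    (fun a b => by simpa using le_total _ _) l

theorem List.sum_Icc_getD_sub_one_eq_sum_take {α : Type*} [AddCommMonoid α] (l : List α)
    (n : ℕ) :
    ∑ k ∈ Finset.Icc 1 n, l.getD (k - 1) 0 = (l.take n).sum := by
  induction n with
  | zero => simp
  | succ n ih =>
    rw [Finset.sum_Icc_succ_top (by omega), ih, List.take_add_one, List.sum_append,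
      List.getD_eq_getElem?_getD]
    cases h : l[n]? <;> simp [h]

theorem phocas_eq_sum_take_sortByDist_div {m : ℕ} (b : ℕ) (u : Fin m → ℝ) :
    phocas b u = ((sortByDist (trmean b u) (List.ofFn u)).take (m - b)).sum / ((m : ℝ) - b) := by
  rw [phocas, ← List.sum_Icc_getD_sub_one_eq_sum_take]
  rfl

theorem sq_mean_take_sortByDist_sub_le (y : ℝ) {l c : List ℝ} (hc : c.Subperm l) {p : ℕ}
    (hp : 0 < p) (hpc : p ≤ c.length) :
    (((sortByDist y l).take p).sum / p - y) ^ 2 ≤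
      (c.map fun x => (x - y) ^ 2).sum / c.length := by
  set L := sortByDist y l
  set f : ℝ → ℝ := fun x => (x - y) ^ 2
  have hL : (L.map f).Pairwise (· ≤ ·) :=
    (sortByDist_pairwise y l).map f fun a b h => by
      simpa [f, sq_abs] using pow_le_pow_left₀ (abs_nonneg _) h 2
  obtain ⟨c', hc'c, hc'L⟩ := hc.trans (sortByDist_perm y l).symm.subperm
  have hsub : (c'.map f).Sublist (L.map f) := hc'L.map f
  have hlen : (c'.map f).length = c.length := by simp [hc'c.length_eq]
  have hpL : p ≤ L.length := hpc.trans (by simpa [hc'c.length_eq] using hc'L.length_le)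
  have hne : L.take p ≠ [] := List.ne_nil_of_length_pos (by rwa [List.length_take_of_le hpL])
  calc ((L.take p).sum / p - y) ^ 2
      ≤ ((L.take p).map f).sum / p := by
        simpa [List.length_take_of_le hpL] using List.sq_sum_div_length_sub_le hne y
    _ = ((L.map f).take p).sum / p := by rw [List.map_take]
    _ ≤ ((c'.map f).take p).sum / p := by
        gcongr
        exact hsub.sum_take_le_sum_take hL (hlen ▸ hpc)
    _ ≤ (c'.map f).sum / c.length := by
        have h := List.length_nsmul_sum_take_le (hL.sublist hsub) (hlen ▸ hpc)
        rw [hlen, nsmul_eq_mul, nsmul_eq_mul] at h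
        rw [div_le_div_iff₀ (by positivity) (by exact_mod_cast hp.trans_le hpc)]
        linarith
    _ = (c.map f).sum / c.length := by rw [(hc'c.map f).sum_eq]

theorem sum_sq_sub_div_card_le {ι : Type*} (s : Finset ι) (x : ι → ℝ) (y g : ℝ) :
    (∑ i ∈ s, (x i - y) ^ 2) / s.card ≤
      2 / s.card * ∑ i ∈ s, (x i - g) ^ 2 + 2 * (g - y) ^ 2 := by
  rcases s.eq_empty_or_nonempty with rfl | hs
  · simp only [Finset.sum_empty, zero_div, mul_zero, zero_add]
    positivity
  have hpt : ∀ i ∈ s, (x i - y) ^ 2 ≤ 2 * (x i - g) ^ 2 + 2 * (g - y) ^ 2 := fun i _ => by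
    simpa [mul_add] using add_sq_le (a := x i - g) (b := g - y)
  have hcard : (0 : ℝ) < s.card := by exact_mod_cast hs.card_pos
  calc (∑ i ∈ s, (x i - y) ^ 2) / s.card
      ≤ (∑ i ∈ s, (2 * (x i - g) ^ 2 + 2 * (g - y) ^ 2)) / s.card := by
        gcongr with i hi
        exact hpt i hi
    _ = _ := by
        rw [Finset.sum_add_distrib, ← Finset.mul_sum, Finset.sum_const, nsmul_eq_mul]
        field_simp

theorem phocas_sub_trmean_sq_bound_general (m q b : ℕ) (hqb : q ≤ b)
    (vt : Fin m → ℝ) (v : Fin (m - q) → ℝ)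
    (hS : ∃ S : Finset (Fin m), S.card = m - q ∧
      Multiset.map v Finset.univ.val = Multiset.map vt S.val)
    (g : ℝ) :
    (phocas b vt - trmean b vt) ^ 2 ≤
      2 / ((m : ℝ) - q) * ∑ i, (v i - g) ^ 2 + 2 * (g - trmean b vt) ^ 2 := by
  set T := trmean b vt
  rcases le_or_gt m b with hmb | hbm
  -- `m - b = 0` in `ℕ`, so both averages are empty sums
  · have hT : T = 0 := by simp [T, trmean, Nat.sub_eq_zero_of_le hmb]
    have hP : phocas b vt = 0 := by simp [phocas, Nat.sub_eq_zero_of_le hmb]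
    have hrhs : 0 ≤ 2 / ((m : ℝ) - q) * ∑ i, (v i - g) ^ 2 := by
      rcases le_or_gt q m with hqm | hmq
      · exact mul_nonneg (div_nonneg zero_le_two (sub_nonneg.2 (by exact_mod_cast hqm)))
          (Finset.sum_nonneg fun _ _ => sq_nonneg _)
      · have : IsEmpty (Fin (m - q)) := by rw [Nat.sub_eq_zero_of_le hmq.le]; infer_instance
        simp
    rw [hP, hT]
    nlinarith [sq_nonneg g]
  obtain ⟨S, -, hSv⟩ := hS
  have hc : (List.ofFn v).Subperm (List.ofFn vt) := by
    rw [← Multiset.coe_le, ← Fin.univ_val_map, ← Fin.univ_val_map, hSv]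
    exact Multiset.map_le_map (Finset.val_le_iff.2 (Finset.subset_univ S))
  have key := sq_mean_take_sortByDist_sub_le T hc (p := m - b) (by omega)
    (by rw [List.length_ofFn]; omega)
  simp only [List.length_ofFn, List.map_ofFn, List.sum_ofFn, Function.comp_def] at key
  have hbound := sum_sq_sub_div_card_le Finset.univ v T g
  simp only [Finset.card_univ, Fintype.card_fin] at hbound
  rw [phocas_eq_sum_take_sortByDist_div]
  push_cast [hbm.le, hqb.trans hbm.le] at key hbound
  exact key.trans hbound

/-- Deterministic bound for Phocas relative to the trimmed mean: if the multiset
`{ṽ_1, …, ṽ_m}` contains the multiset of correct values `{v_1, …, v_{m-q}}` as a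
sub-multiset, with `0 ≤ q ≤ b ≤ ⌈m/2⌉ - 1`, and `T = Trmean_b(ṽ)`, then for any
real `g`,
`(Phocas_b(ṽ) - T)² ≤ (2/(m-q)) ∑_{i=1}^{m-q} (v_i - g)² + 2(g - T)²`. -/
theorem phocas_sub_trmean_sq_bound (m q b : ℕ) (hqb : q ≤ b)
    (hb : b ≤ (m + 1) / 2 - 1)
    (vt : Fin m → ℝ) (v : Fin (m - q) → ℝ)
    (hS : ∃ S : Finset (Fin m), S.card = m - q ∧
      Multiset.map v Finset.univ.val = Multiset.map vt S.val)
    (g : ℝ) :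
    (phocas b vt - trmean b vt) ^ 2 ≤
      2 / ((m : ℝ) - q) * ∑ i, (v i - g) ^ 2 + 2 * (g - trmean b vt) ^ 2 :=
  phocas_sub_trmean_sq_bound_general m q b hqb vt v hS g
end

section
/- Theorem 4 (convergence of synchronous SGD with a Δ-resilient aggregation, smooth possibly nonconvex case): Let F : ℝ^d → ℝ be differentiable and L_F-smooth with L_F > 0, and let x* be a global minimizer of F. Let 0 < γ ≤ 1/L_F. Let x^0 ∈ ℝ^d be deterministic and let (g^t)_{t=0}^{T−1} be random vectors in ℝ^d (with the relevant expectations finite) defining iterates x^{t+1} = x^t − γ g^t, such that E[‖g^t − ∇F(x^t)‖²] ≤ Δ for every t < T, where Δ ≥ 0 and T ≥ 1. Then (1/T) Σ_{t=0}^{T−1} E[‖∇F(x^t)‖²] ≤ (2/(γT)) (F(x^0) − F(x*)) + Δ. -/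
open MeasureTheory RealInnerProductSpace

/-- Theorem 4 (convergence of synchronous SGD with a `Δ`-resilient aggregation,
smooth possibly nonconvex case): if `F : ℝ^d → ℝ` is differentiable and `L_F`-smooth
with `L_F > 0`, `x*` is a global minimizer of `F`, `0 < γ ≤ 1/L_F`, the iterates
satisfy `x⁰ = x0` (deterministic) and `x^{t+1} = x^t - γ g^t`, and the aggregated
gradients satisfy `E‖g^t - ∇F(x^t)‖² ≤ Δ` for all `t < T` (`T ≥ 1`), then
`(1/T) ∑_{t<T} E‖∇F(x^t)‖² ≤ (2/(γT))(F(x⁰) - F(x*)) + Δ`. -/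
theorem sgd_smooth_convergence
    {Ω : Type*} [MeasurableSpace Ω] (μ : Measure Ω) [IsProbabilityMeasure μ]
    (d : ℕ) (LF : ℝ) (hL : 0 < LF)
    (F : EuclideanSpace ℝ (Fin d) → ℝ) (hdiff : Differentiable ℝ F)
    (hsm : ∀ x y : EuclideanSpace ℝ (Fin d),
      F y - F x ≤ ⟪gradient F x, y - x⟫ + LF / 2 * ‖y - x‖ ^ 2)
    (xs : EuclideanSpace ℝ (Fin d)) (hmin : ∀ y, F xs ≤ F y)
    (γ : ℝ) (hγ0 : 0 < γ) (hγ : γ ≤ 1 / LF)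
    (Δ : ℝ) (hΔ : 0 ≤ Δ) (T : ℕ) (hT : 1 ≤ T)
    (x0 : EuclideanSpace ℝ (Fin d))
    (x : ℕ → Ω → EuclideanSpace ℝ (Fin d))
    (g : ℕ → Ω → EuclideanSpace ℝ (Fin d))
    (hx0 : ∀ ω, x 0 ω = x0)
    (hstep : ∀ t (ω : Ω), x (t + 1) ω = x t ω - γ • g t ω)
    (hxmeas : ∀ t, AEStronglyMeasurable (x t) μ)
    (hgmeas : ∀ t, AEStronglyMeasurable (g t) μ)
    (hFint : ∀ t, t ≤ T → Integrable (fun ω => F (x t ω)) μ)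
    (hgradint : ∀ t, t < T → Integrable (fun ω => ‖gradient F (x t ω)‖ ^ 2) μ)
    (hgint : ∀ t, t < T → Integrable (fun ω => ‖g t ω - gradient F (x t ω)‖ ^ 2) μ)
    (hres : ∀ t, t < T → ∫ ω, ‖g t ω - gradient F (x t ω)‖ ^ 2 ∂μ ≤ Δ) :
    (∑ t ∈ Finset.range T, ∫ ω, ‖gradient F (x t ω)‖ ^ 2 ∂μ) / T ≤
      2 / (γ * T) * (F x0 - F xs) + Δ := by
  have hγ1 : LF * γ ≤ 1 := by
    rw [le_div_iff₀ hL] at hγ; linarith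
  have hTpos : (0:ℝ) < (T:ℝ) := by exact_mod_cast hT
  -- key per-step inequality in expectation
  have key : ∀ t, t < T →
      γ / 2 * (∫ ω, ‖gradient F (x t ω)‖ ^ 2 ∂μ) ≤
        (∫ ω, F (x t ω) ∂μ) - (∫ ω, F (x (t + 1) ω) ∂μ) + γ / 2 * Δ := by
    intro t ht
    have hpt : ∀ ω, γ / 2 * ‖gradient F (x t ω)‖ ^ 2 ≤
        F (x t ω) - F (x (t + 1) ω) + γ / 2 * ‖g t ω - gradient F (x t ω)‖ ^ 2 := by
      intro ω
      rw [hstep t ω]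
      set a := gradient F (x t ω) with ha
      set b := g t ω with hb
      have h1 := hsm (x t ω) (x (t + 1) ω)
      rw [hstep t ω] at h1
      have hd : x t ω - γ • b - x t ω = -(γ • b) := by abel
      rw [hd, inner_neg_right, real_inner_smul_right, norm_neg, norm_smul,
        Real.norm_eq_abs, abs_of_pos hγ0] at h1
      have hsq : (γ * ‖b‖) ^ 2 = γ ^ 2 * ‖b‖ ^ 2 := by ring
      rw [hsq] at h1
      have h2 : LF / 2 * (γ ^ 2 * ‖b‖ ^ 2) ≤ γ / 2 * ‖b‖ ^ 2 := by
        nlinarith [sq_nonneg ‖b‖, mul_nonneg hγ0.le (sq_nonneg ‖b‖)]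
      have h3 : ‖b - a‖ ^ 2 = ‖b‖ ^ 2 - 2 * ⟪b, a⟫ + ‖a‖ ^ 2 :=
        norm_sub_sq_real b a
      have h4 : ⟪b, a⟫ = ⟪a, b⟫ := real_inner_comm a b
      rw [h4] at h3
      nlinarith [h1, h2, h3]
    have hint1 : Integrable (fun ω => F (x t ω) - F (x (t + 1) ω)
        + γ / 2 * ‖g t ω - gradient F (x t ω)‖ ^ 2) μ :=
      ((hFint t ht.le).sub (hFint (t + 1) ht)).add ((hgint t ht).const_mul _)
    have hint2 : Integrable (fun ω => γ / 2 * ‖gradient F (x t ω)‖ ^ 2) μ :=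
      (hgradint t ht).const_mul _
    have hfg : Integrable (fun ω => F (x t ω) - F (x (t + 1) ω)) μ :=
      (hFint t ht.le).sub (hFint (t + 1) ht)
    have hc : Integrable (fun ω => γ / 2 * ‖g t ω - gradient F (x t ω)‖ ^ 2) μ :=
      (hgint t ht).const_mul _
    have hmono := integral_mono hint2 hint1 hpt
    rw [integral_add hfg hc, integral_sub (hFint t ht.le) (hFint (t + 1) ht),
      integral_const_mul, integral_const_mul] at hmono
    have hres' := hres t ht
    have : γ / 2 * (∫ ω, ‖g t ω - gradient F (x t ω)‖ ^ 2 ∂μ) ≤ γ / 2 * Δ := by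
      apply mul_le_mul_of_nonneg_left hres' (by linarith)
    linarith
  -- sum over t
  set S := ∑ t ∈ Finset.range T, ∫ ω, ‖gradient F (x t ω)‖ ^ 2 ∂μ with hS
  have hsum : γ / 2 * S ≤ (∫ ω, F (x 0 ω) ∂μ) - (∫ ω, F (x T ω) ∂μ) + T * (γ / 2 * Δ) := by
    have h1 : γ / 2 * S = ∑ t ∈ Finset.range T, γ / 2 * ∫ ω, ‖gradient F (x t ω)‖ ^ 2 ∂μ := by
      rw [hS, Finset.mul_sum]
    have h2 : ∑ t ∈ Finset.range T, γ / 2 * ∫ ω, ‖gradient F (x t ω)‖ ^ 2 ∂μ ≤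
        ∑ t ∈ Finset.range T,
          ((∫ ω, F (x t ω) ∂μ) - (∫ ω, F (x (t + 1) ω) ∂μ) + γ / 2 * Δ) :=
      Finset.sum_le_sum fun t ht => key t (Finset.mem_range.mp ht)
    rw [Finset.sum_add_distrib, Finset.sum_const, Finset.card_range,
      Finset.sum_range_sub' (fun t => ∫ ω, F (x t ω) ∂μ) T] at h2
    rw [h1]
    calc _ ≤ _ := h2
      _ = _ := by push_cast; ring
  have hx0int : (∫ ω, F (x 0 ω) ∂μ) = F x0 := by
    simp only [hx0]
    simp [measure_univ]
  have hxT : F xs ≤ ∫ ω, F (x T ω) ∂μ := by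
    have := integral_mono (integrable_const (F xs)) (hFint T le_rfl)
      (fun ω => hmin (x T ω))
    simpa using this
  have hmain : γ / 2 * S ≤ (F x0 - F xs) + T * (γ / 2 * Δ) := by
    rw [hx0int] at hsum; linarith
  have hγT : 0 < γ * T := mul_pos hγ0 hTpos
  rw [div_le_iff₀ hTpos]
  have hSle : S ≤ 2 / γ * (F x0 - F xs) + Δ * T := by
    have h5 : S = 2 / γ * (γ / 2 * S) := by field_simp
    rw [h5]
    calc 2 / γ * (γ / 2 * S) ≤ 2 / γ * ((F x0 - F xs) + T * (γ / 2 * Δ)) := by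
          apply mul_le_mul_of_nonneg_left hmain (by positivity)
      _ = 2 / γ * (F x0 - F xs) + Δ * T := by field_simp
  have heq : (2 / (γ * T) * (F x0 - F xs) + Δ) * T = 2 / γ * (F x0 - F xs) + Δ * T := by
    field_simp
  rw [heq]
  exact hSle
end

section
/- Proposition 2 (no selection rule is dimensional Byzantine-resilient): Let m ≤ d and let A : (ℝ^d)^m → ℝ^d be any function satisfying A(w_1, …, w_m) ∈ {w_1, …, w_m} for all inputs. Then for every g ∈ ℝ^d, every v_1, …, v_m ∈ ℝ^d and every constant C > 0, there exist ṽ_1, …, ṽ_m ∈ ℝ^d such that each ṽ_i differs from v_i only in its i-th coordinate (so for every coordinate j, at most one index i satisfies (ṽ_i)_j ≠ (v_i)_j, i.e., q = 1 Byzantine value per dimension) and ‖A(ṽ_1, …, ṽ_m) − g‖² > C. -/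
/-!
Replace the `i`-th coordinate of the `i`-th input by a huge value `t`. Whichever input a
selection rule returns then has some coordinate equal to `t`, so its distance to `g` is at
least `t - ‖g‖`, which is unbounded in `t`.
-/

open WithLp

section SpikeAt

variable {ι κ : Type*} [DecidableEq κ]

noncomputable def spikeAt (e : ι → κ) (t : ℝ) (v : ι → EuclideanSpace ℝ κ) :
    ι → EuclideanSpace ℝ κ :=
  fun i => toLp 2 (Function.update (ofLp (v i)) (e i) t)

theorem spikeAt_apply_self (e : ι → κ) (t : ℝ) (v : ι → EuclideanSpace ℝ κ) (i : ι) :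
    spikeAt e t v i (e i) = t :=
  Function.update_self _ _ _

theorem spikeAt_apply_of_ne (e : ι → κ) (t : ℝ) (v : ι → EuclideanSpace ℝ κ) {i : ι} {j : κ}
    (hj : j ≠ e i) : spikeAt e t v i j = v i j :=
  Function.update_of_ne hj _ _

end SpikeAt

theorem sub_norm_le_norm_sub_of_apply_eq {κ : Type*} [Fintype κ] {x : EuclideanSpace ℝ κ}
    {j : κ} {t : ℝ} (hx : x j = t) (g : EuclideanSpace ℝ κ) : t - ‖g‖ ≤ ‖x - g‖ := by
  have hdiff : |t - g j| ≤ ‖x - g‖ := by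
    simpa [← hx] using PiLp.norm_apply_le (x - g) j
  have hg : |g j| ≤ ‖g‖ := by simpa using PiLp.norm_apply_le g j
  linarith [le_abs_self (t - g j), le_abs_self (g j)]

theorem le_norm_selection_spikeAt_sub {ι κ : Type*} [Fintype κ] [DecidableEq κ]
    (A : (ι → EuclideanSpace ℝ κ) → EuclideanSpace ℝ κ) (hA : ∀ w, ∃ i, A w = w i)
    (e : ι → κ) (v : ι → EuclideanSpace ℝ κ) (g : EuclideanSpace ℝ κ) (r : ℝ) :
    r ≤ ‖A (spikeAt e (‖g‖ + r) v) - g‖ := by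
  obtain ⟨i, hi⟩ := hA (spikeAt e (‖g‖ + r) v)
  have hspike : A (spikeAt e (‖g‖ + r) v) (e i) = ‖g‖ + r := by
    rw [hi, spikeAt_apply_self]
  simpa using sub_norm_le_norm_sub_of_apply_eq hspike g

theorem selection_not_dimensional_byzantine_resilient_general (m d : ℕ) (hmd : m ≤ d)
    (A : (Fin m → EuclideanSpace ℝ (Fin d)) → EuclideanSpace ℝ (Fin d))
    (hA : ∀ w, ∃ i : Fin m, A w = w i)
    (g : EuclideanSpace ℝ (Fin d)) (v : Fin m → EuclideanSpace ℝ (Fin d))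
    (C : ℝ) :
    ∃ vt : Fin m → EuclideanSpace ℝ (Fin d),
      (∀ (i : Fin m) (j : Fin d), (j : ℕ) ≠ (i : ℕ) → vt i j = v i j) ∧
      ‖A vt - g‖ ^ 2 > C := by
  refine ⟨spikeAt (Fin.castLE hmd) (‖g‖ + (C + 1)) v, ?_, ?_⟩
  · intro i j hj
    exact spikeAt_apply_of_ne _ _ _ fun h => hj (by simp [h])
  · have hdist := le_norm_selection_spikeAt_sub A hA (Fin.castLE hmd) v g (C + 1)
    nlinarith

/-- Proposition 2 (no selection rule is dimensional Byzantine-resilient):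
let `m ≤ d` and let `A` be any aggregation rule on `m` vectors in `ℝ^d` whose output
is always one of its inputs. Then for every `g`, every correct vectors `v_1, …, v_m`
and every `C > 0`, there exist `ṽ_1, …, ṽ_m` such that each `ṽ_i` differs from `v_i`
only in its `i`-th coordinate (so each dimension has at most `q = 1` Byzantine value)
and `‖A(ṽ_1, …, ṽ_m) - g‖² > C`. -/
theorem selection_not_dimensional_byzantine_resilient (m d : ℕ) (hmd : m ≤ d)
    (A : (Fin m → EuclideanSpace ℝ (Fin d)) → EuclideanSpace ℝ (Fin d))
    (hA : ∀ w, ∃ i : Fin m, A w = w i)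
    (g : EuclideanSpace ℝ (Fin d)) (v : Fin m → EuclideanSpace ℝ (Fin d))
    (C : ℝ) (hC : 0 < C) :
    ∃ vt : Fin m → EuclideanSpace ℝ (Fin d),
      (∀ (i : Fin m) (j : Fin d), (j : ℕ) ≠ (i : ℕ) → vt i j = v i j) ∧
      ‖A vt - g‖ ^ 2 > C :=
  selection_not_dimensional_byzantine_resilient_general m d hmd A hA g v C
end

section
/- Proposition 3 (Krum is not dimensional Byzantine-resilient): Fix integers m, q, d with 2q + 2 < m and m ≤ d. Define the Krum score of index i on inputs w_1, …, w_m ∈ ℝ^d as s(i) = min over subsets N ⊆ {1,…,m}\{i} with |N| = m − q − 2 of Σ_{j∈N} ‖w_i − w_j‖² (the sum of squared distances to the m−q−2 nearest neighbors of w_i), and let Krum(w_1,…,w_m) = w_k for any k attaining the minimal score (any fixed tie-breaking rule). Then for every g ∈ ℝ^d, every v_1, …, v_m ∈ ℝ^d and every constant C > 0, there exist ṽ_1, …, ṽ_m ∈ ℝ^d such that each ṽ_i differs from v_i only in its i-th coordinate (at most one Byzantine value per dimension) and ‖Krum(ṽ_1, …, ṽ_m) − g‖² > C. -/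
/-!
Krum always outputs one of its inputs, and an adversary allowed one Byzantine value per
dimension can corrupt every input: with `m ≤ d`, it moves the `i`-th coordinate of `ṽ_i` to
`g_i + B`. Whichever input Krum then selects lies at distance at least `B` from `g`, and `B`
is arbitrary.
-/

/-- The Krum score of index `i` on inputs `w : Fin m → ℝ^d` with `q` assumed Byzantine
workers: the minimum, over all subsets `N ⊆ {1,…,m} \ {i}` with `|N| = m - q - 2`, of
`∑_{j ∈ N} ‖w i - w j‖²` (the sum of squared distances to the `m - q - 2` nearest
neighbors of `w i`). -/
noncomputable def krumScore {m d : ℕ} (q : ℕ)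
    (w : Fin m → EuclideanSpace ℝ (Fin d)) (i : Fin m) : ℝ :=
  sInf ((fun N => ∑ j ∈ N, ‖w i - w j‖ ^ 2) ''
    {N : Finset (Fin m) | N ⊆ Finset.univ.erase i ∧ N.card = m - q - 2})

namespace EuclideanSpace

variable {κ : Type*} [DecidableEq κ]

noncomputable def offsetCoord (v g : EuclideanSpace ℝ κ) (j : κ) (B : ℝ) :
    EuclideanSpace ℝ κ :=
  v + EuclideanSpace.single j (g j + B - v j)

lemma offsetCoord_apply_of_ne (v g : EuclideanSpace ℝ κ) {j j' : κ} (B : ℝ) (h : j' ≠ j) :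
    offsetCoord v g j B j' = v j' := by
  simp [offsetCoord, h]

lemma abs_le_norm_offsetCoord_sub [Fintype κ] (v g : EuclideanSpace ℝ κ) (j : κ) (B : ℝ) :
    |B| ≤ ‖offsetCoord v g j B - g‖ := by
  have hcoord : (offsetCoord v g j B - g) j = B := by
    simp [offsetCoord]
  simpa [hcoord] using PiLp.norm_apply_le (offsetCoord v g j B - g) j

end EuclideanSpace

open EuclideanSpace

theorem exists_offsetCoord_far_of_selects_input {ι κ : Type*} [Fintype κ] [DecidableEq κ]
    (Aggr : (ι → EuclideanSpace ℝ κ) → EuclideanSpace ℝ κ)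
    (hAggr : ∀ w, ∃ k, Aggr w = w k) (e : ι → κ)
    (g : EuclideanSpace ℝ κ) (v : ι → EuclideanSpace ℝ κ) (C : ℝ) :
    ∃ vt : ι → EuclideanSpace ℝ κ,
      (∀ i j, j ≠ e i → vt i j = v i j) ∧ C < ‖Aggr vt - g‖ ^ 2 := by
  set B := |C| + 1
  refine ⟨fun i => offsetCoord (v i) g (e i) B,
    fun i j hj => offsetCoord_apply_of_ne _ _ _ hj, ?_⟩
  obtain ⟨k, hk⟩ := hAggr fun i => offsetCoord (v i) g (e i) B
  have hfar : B ≤ ‖Aggr (fun i => offsetCoord (v i) g (e i) B) - g‖ := by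
    rw [hk]
    simpa [abs_of_pos (by positivity : 0 < B)] using abs_le_norm_offsetCoord_sub (v k) g (e k) B
  have hCB : C < B := lt_of_le_of_lt (le_abs_self C) (lt_add_one _)
  nlinarith [abs_nonneg C]

theorem krum_not_dimensional_byzantine_resilient_general (m q d : ℕ)
    (hmd : m ≤ d)
    (Krum : (Fin m → EuclideanSpace ℝ (Fin d)) → EuclideanSpace ℝ (Fin d))
    (hKrum : ∀ w, ∃ k : Fin m, Krum w = w k ∧ ∀ i, krumScore q w k ≤ krumScore q w i)
    (g : EuclideanSpace ℝ (Fin d)) (v : Fin m → EuclideanSpace ℝ (Fin d))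
    (C : ℝ) :
    ∃ vt : Fin m → EuclideanSpace ℝ (Fin d),
      (∀ (i : Fin m) (j : Fin d), (j : ℕ) ≠ (i : ℕ) → vt i j = v i j) ∧
      ‖Krum vt - g‖ ^ 2 > C := by
  have hselect : ∀ w, ∃ k, Krum w = w k := fun w => (hKrum w).imp fun _ hk => hk.1
  obtain ⟨vt, hvt, hfar⟩ :=
    exists_offsetCoord_far_of_selects_input Krum hselect (Fin.castLE hmd) g v C
  exact ⟨vt, fun i j hj => hvt i j fun h => hj (by simp [h]), hfar⟩

/-- Proposition 3 (Krum is not dimensional Byzantine-resilient): fix `2q + 2 < m ≤ d`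
and let `Krum` be any rule that always outputs an input vector attaining the minimal
Krum score (any fixed tie-breaking). Then for every `g`, every correct vectors
`v_1, …, v_m` and every `C > 0`, there exist `ṽ_1, …, ṽ_m` such that each `ṽ_i`
differs from `v_i` only in its `i`-th coordinate (at most one Byzantine value per
dimension) and `‖Krum(ṽ_1, …, ṽ_m) - g‖² > C`. -/
theorem krum_not_dimensional_byzantine_resilient (m q d : ℕ)
    (hq : 2 * q + 2 < m) (hmd : m ≤ d)
    (Krum : (Fin m → EuclideanSpace ℝ (Fin d)) → EuclideanSpace ℝ (Fin d))
    (hKrum : ∀ w, ∃ k : Fin m, Krum w = w k ∧ ∀ i, krumScore q w k ≤ krumScore q w i)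
    (g : EuclideanSpace ℝ (Fin d)) (v : Fin m → EuclideanSpace ℝ (Fin d))
    (C : ℝ) (hC : 0 < C) :
    ∃ vt : Fin m → EuclideanSpace ℝ (Fin d),
      (∀ (i : Fin m) (j : Fin d), (j : ℕ) ≠ (i : ℕ) → vt i j = v i j) ∧
      ‖Krum vt - g‖ ^ 2 > C :=
  krum_not_dimensional_byzantine_resilient_general m q d hmd Krum hKrum g v C
end

section
/- Lemma 1 (classic Byzantine resilience of Krum with explicit constant): Let m, q be integers with 2q + 2 < m. Let v_1, …, v_m be i.i.d. random vectors in ℝ^d with E[v_i] = g and E[‖v_i − g‖²] ≤ V. Let B ⊆ {1,…,m} with |B| ≤ q, and let ṽ_i = v_i for i ∉ B while ṽ_i for i ∈ B are arbitrary random vectors in ℝ^d (measurable, possibly depending on all the v_j). Define the Krum score s(i) = min over subsets N ⊆ {1,…,m}\{i} with |N| = m − q − 2 of Σ_{j∈N} ‖ṽ_i − ṽ_j‖², and let Krum({ṽ_i : i ∈ [m]}) = ṽ_k for k minimizing s(i) (fixed tie-breaking). Then E[‖Krum({ṽ_i : i ∈ [m]}) − g‖²] ≤ Δ₀, where Δ₀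 = (6(m−q) + (4q(m−q−2) + 4q²(m−q−1))/(m−2q−2)) V. -/
/-!
Let `C` be the set of honest indices and `S = ∑_{j ∈ C} ‖w j - g‖²`. Averaging the bound
`∑_{i,j ∈ C} ‖w i - w j‖² ≤ 2 |C| S` produces an honest `i` whose Krum score is at most `2S`,
so the winner `k` has score at most `2S` too. At least `m - 2q - 2` of the `m - q - 2` neighbours
realising the score of `k` are honest, and for each of them
`‖w k - g‖² ≤ 2‖w k - w j‖² + 2‖w j - g‖²`; summing gives `(m - 2q - 2) ‖w k - g‖² ≤ 6S`.
Taking expectations, `E‖w k - g‖² ≤ 6 m V / (m - 2q - 2)`, which is below the stated constant.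
-/

open MeasureTheory ProbabilityTheory Finset

theorem norm_sub_sq_le_two_mul_add {E : Type*} [SeminormedAddCommGroup E] (x y z : E) :
    ‖x - z‖ ^ 2 ≤ 2 * (‖x - y‖ ^ 2 + ‖y - z‖ ^ 2) :=
  (pow_le_pow_left₀ (norm_nonneg _) (norm_sub_le_norm_sub_add_norm_sub x y z) 2).trans add_sq_le

section InnerProductSpace

variable {ι E : Type*} [NormedAddCommGroup E] [InnerProductSpace ℝ E]

theorem sum_sum_norm_sub_sq (s : Finset ι) (a : ι → E) :
    ∑ i ∈ s, ∑ j ∈ s, ‖a i - a j‖ ^ 2 = 2 * #s * ∑ i ∈ s, ‖a i‖ ^ 2 - 2 * ‖∑ i ∈ s, a i‖ ^ 2 := by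
  simp_rw [norm_sub_sq_real, sum_add_distrib, sum_sub_distrib, sum_const, ← mul_sum,
    ← inner_sum, ← sum_inner, real_inner_self_eq_norm_sq, nsmul_eq_mul, ← mul_sum]
  ring

theorem sum_sum_norm_sub_sq_le (s : Finset ι) (a : ι → E) (c : E) :
    ∑ i ∈ s, ∑ j ∈ s, ‖a i - a j‖ ^ 2 ≤ 2 * #s * ∑ i ∈ s, ‖a i - c‖ ^ 2 := by
  have h := sum_sum_norm_sub_sq s (fun i => a i - c)
  simp only [sub_sub_sub_cancel_right] at h
  linarith [sq_nonneg ‖∑ i ∈ s, (a i - c)‖]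

theorem exists_sum_norm_sub_sq_le {s : Finset ι} (hs : s.Nonempty) (a : ι → E) (c : E) :
    ∃ i ∈ s, ∑ j ∈ s, ‖a i - a j‖ ^ 2 ≤ 2 * ∑ j ∈ s, ‖a j - c‖ ^ 2 := by
  refine exists_le_of_sum_le hs ?_
  rw [sum_const, nsmul_eq_mul, ← mul_assoc]
  exact (sum_sum_norm_sub_sq_le s a c).trans_eq (by ring)

end InnerProductSpace

theorem one_le_sub_two_mul_sub_two {m q : ℕ} (hq : 2 * q + 2 < m) :
    (1 : ℝ) ≤ (m : ℝ) - 2 * q - 2 := by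
  have : (2 * q + 3 : ℝ) ≤ m := by exact_mod_cast hq
  linarith

section Krum

variable {m d q : ℕ} (w : Fin m → EuclideanSpace ℝ (Fin d))

theorem krumScore_le_sum {i : Fin m} {N : Finset (Fin m)} (hN : N ⊆ univ.erase i)
    (hcard : #N = m - q - 2) :
    krumScore q w i ≤ ∑ j ∈ N, ‖w i - w j‖ ^ 2 :=
  csInf_le ((Set.toFinite _).image _).bddBelow ⟨N, ⟨hN, hcard⟩, rfl⟩

theorem exists_krumScore_eq_sum (i : Fin m) :
    ∃ N ⊆ univ.erase i, #N = m - q - 2 ∧ krumScore q w i = ∑ j ∈ N, ‖w i - w j‖ ^ 2 := by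
  obtain ⟨N, hN, hcard⟩ := exists_subset_card_eq (s := univ.erase i) (n := m - q - 2)
    (by rw [card_erase_of_mem (mem_univ i), card_univ, Fintype.card_fin]; omega)
  obtain ⟨N', ⟨hN', hcard'⟩, hval⟩ :=
    ((Set.nonempty_of_mem (s := {N : Finset (Fin m) | N ⊆ univ.erase i ∧ #N = m - q - 2})
      ⟨hN, hcard⟩).image fun N => ∑ j ∈ N, ‖w i - w j‖ ^ 2).csInf_mem
      ((Set.toFinite _).image _)
  exact ⟨N', hN', hcard', hval.symm⟩

theorem krumScore_le_sum_of_mem {i : Fin m} {C : Finset (Fin m)} (hi : i ∈ C)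
    (hC : m - q - 1 ≤ #C) :
    krumScore q w i ≤ ∑ j ∈ C, ‖w i - w j‖ ^ 2 := by
  obtain ⟨N, hN, hcard⟩ := exists_subset_card_eq (s := C.erase i) (n := m - q - 2)
    (by rw [card_erase_of_mem hi]; omega)
  calc krumScore q w i ≤ ∑ j ∈ N, ‖w i - w j‖ ^ 2 :=
        krumScore_le_sum w (hN.trans (erase_subset_erase i (subset_univ C))) hcard
    _ ≤ ∑ j ∈ C, ‖w i - w j‖ ^ 2 :=
        sum_le_sum_of_subset_of_nonneg (hN.trans (erase_subset i C)) fun _ _ _ => by positivity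

theorem exists_honest_krumScore_le (hq : q < m) {B : Finset (Fin m)} (hB : #B ≤ q)
    (g : EuclideanSpace ℝ (Fin d)) :
    ∃ i ∈ Bᶜ, krumScore q w i ≤ 2 * ∑ j ∈ Bᶜ, ‖w j - g‖ ^ 2 := by
  have hBc : #Bᶜ = m - #B := by rw [card_compl, Fintype.card_fin]
  obtain ⟨i, hi, hsum⟩ :=
    exists_sum_norm_sub_sq_le (card_pos.mp (by omega : 0 < #Bᶜ)) w g
  exact ⟨i, hi, (krumScore_le_sum_of_mem w hi (by omega)).trans hsum⟩

theorem mul_norm_sub_sq_le_of_krumScore_le {B : Finset (Fin m)} (hB : #B ≤ q) {k : Fin m}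
    {σ : ℝ} (hk : krumScore q w k ≤ σ) (g : EuclideanSpace ℝ (Fin d)) :
    ((m : ℝ) - 2 * q - 2) * ‖w k - g‖ ^ 2 ≤ 2 * σ + 2 * ∑ j ∈ Bᶜ, ‖w j - g‖ ^ 2 := by
  obtain ⟨N, -, hcard, hscore⟩ := exists_krumScore_eq_sum (q := q) w k
  have hT : m ≤ #(N \ B) + 2 * q + 2 := by
    have := card_sdiff_add_card_inter N B
    have := card_le_card (inter_subset_right (s₁ := N) (s₂ := B))
    omega
  have hTR : (m : ℝ) - 2 * q - 2 ≤ #(N \ B) := by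
    have : (m : ℝ) ≤ #(N \ B) + 2 * q + 2 := by exact_mod_cast hT
    linarith
  have hnear : ∑ j ∈ N \ B, ‖w k - w j‖ ^ 2 ≤ σ :=
    (sum_le_sum_of_subset_of_nonneg sdiff_subset fun _ _ _ => by positivity).trans
      (hscore ▸ hk)
  have hhonest : ∑ j ∈ N \ B, ‖w j - g‖ ^ 2 ≤ ∑ j ∈ Bᶜ, ‖w j - g‖ ^ 2 :=
    sum_le_sum_of_subset_of_nonneg (fun j hj => mem_compl.mpr (mem_sdiff.mp hj).2)
      fun _ _ _ => by positivity
  calc ((m : ℝ) - 2 * q - 2) * ‖w k - g‖ ^ 2 ≤ #(N \ B) * ‖w k - g‖ ^ 2 := by gcongr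
    _ = ∑ j ∈ N \ B, ‖w k - g‖ ^ 2 := by rw [sum_const, nsmul_eq_mul]
    _ ≤ ∑ j ∈ N \ B, 2 * (‖w k - w j‖ ^ 2 + ‖w j - g‖ ^ 2) :=
        sum_le_sum fun j _ => norm_sub_sq_le_two_mul_add _ _ _
    _ ≤ 2 * σ + 2 * ∑ j ∈ Bᶜ, ‖w j - g‖ ^ 2 := by
        rw [← mul_sum, sum_add_distrib]
        linarith

theorem norm_krum_winner_sub_sq_le (hq : 2 * q + 2 < m) {B : Finset (Fin m)} (hB : #B ≤ q)
    {k : Fin m} (hk : ∀ i, krumScore q w k ≤ krumScore q w i) (g : EuclideanSpace ℝ (Fin d)) :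
    ‖w k - g‖ ^ 2 ≤ 6 / ((m : ℝ) - 2 * q - 2) * ∑ j ∈ Bᶜ, ‖w j - g‖ ^ 2 := by
  obtain ⟨i, -, hi⟩ := exists_honest_krumScore_le w (by omega) hB g
  have hD : (0 : ℝ) < (m : ℝ) - 2 * q - 2 := by linarith [one_le_sub_two_mul_sub_two hq]
  have := mul_norm_sub_sq_le_of_krumScore_le w hB ((hk i).trans hi) g
  rw [div_mul_eq_mul_div, le_div_iff₀ hD]
  linarith

end Krum

theorem six_mul_div_le_krum_constant {m q : ℕ} (hq : 2 * q + 2 < m) :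
    6 / ((m : ℝ) - 2 * q - 2) * m ≤
      6 * ((m : ℝ) - q) +
        (4 * q * ((m : ℝ) - q - 2) + 4 * (q : ℝ) ^ 2 * ((m : ℝ) - q - 1)) /
          ((m : ℝ) - 2 * q - 2) := by
  have hD := one_le_sub_two_mul_sub_two hq
  -- false for real `q ∈ (0, 1)`, and the inequality below needs it
  have hqq : (q : ℝ) ≤ (q : ℝ) ^ 2 := by exact_mod_cast Nat.le_self_pow two_ne_zero q
  rw [div_mul_eq_mul_div, div_le_iff₀ (by linarith), add_mul,
    div_mul_cancel₀ _ (by linarith)]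
  nlinarith

theorem integrable_norm_sub_sq {Ω E : Type*} [MeasurableSpace Ω] {μ : Measure Ω}
    [IsFiniteMeasure μ] [NormedAddCommGroup E] {f : Ω → E} (hf : MemLp f 2 μ) (c : E) :
    Integrable (fun ω => ‖f ω - c‖ ^ 2) μ :=
  (hf.sub (memLp_const c)).integrable_norm_pow two_ne_zero

theorem krum_classic_byzantine_resilient_general
    {Ω : Type*} [MeasurableSpace Ω] (μ : Measure Ω) [IsProbabilityMeasure μ]
    (m q d : ℕ) (hq : 2 * q + 2 < m)
    (g : EuclideanSpace ℝ (Fin d)) (V : ℝ)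
    (v : Fin m → Ω → EuclideanSpace ℝ (Fin d))
    (hL2 : ∀ i, MemLp (v i) 2 μ)
    (hvar : ∀ i, ∫ ω, ‖v i ω - g‖ ^ 2 ∂μ ≤ V)
    (B : Finset (Fin m)) (hB : B.card ≤ q)
    (vt : Fin m → Ω → EuclideanSpace ℝ (Fin d))
    (hvt : ∀ i ∉ B, vt i = v i)
    (Krum : (Fin m → EuclideanSpace ℝ (Fin d)) → EuclideanSpace ℝ (Fin d))
    (hKrum : ∀ w, ∃ k : Fin m, Krum w = w k ∧ ∀ i, krumScore q w k ≤ krumScore q w i) :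
    ∫ ω, ‖Krum (fun i => vt i ω) - g‖ ^ 2 ∂μ ≤
      (6 * ((m : ℝ) - q) +
        (4 * q * ((m : ℝ) - q - 2) + 4 * (q : ℝ) ^ 2 * ((m : ℝ) - q - 1)) /
          ((m : ℝ) - 2 * q - 2)) * V := by
  set c : ℝ := 6 / ((m : ℝ) - 2 * q - 2)
  have hc : 0 ≤ c := div_nonneg (by norm_num) (by linarith [one_le_sub_two_mul_sub_two hq])
  have hV : 0 ≤ V := (integral_nonneg fun _ => by positivity).trans (hvar ⟨0, by omega⟩)
  have hint j := integrable_norm_sub_sq (hL2 j) g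
  have hpoint ω : ‖Krum (fun i => vt i ω) - g‖ ^ 2 ≤ c * ∑ j ∈ Bᶜ, ‖v j ω - g‖ ^ 2 := by
    obtain ⟨k, hKk, hk⟩ := hKrum (fun i => vt i ω)
    rw [hKk]
    convert norm_krum_winner_sub_sq_le _ hq hB hk g using 2
    exact sum_congr rfl fun j hj => by rw [hvt j (mem_compl.mp hj)]
  calc ∫ ω, ‖Krum (fun i => vt i ω) - g‖ ^ 2 ∂μ
      ≤ ∫ ω, c * ∑ j ∈ Bᶜ, ‖v j ω - g‖ ^ 2 ∂μ :=
        integral_mono_of_nonneg (ae_of_all _ fun _ => by positivity)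
          ((integrable_finsetSum _ fun j _ => hint j).const_mul c) (ae_of_all _ hpoint)
    _ = c * ∑ j ∈ Bᶜ, ∫ ω, ‖v j ω - g‖ ^ 2 ∂μ := by
        rw [integral_const_mul, integral_finsetSum _ fun j _ => hint j]
    _ ≤ c * (m * V) := by
        gcongr
        calc ∑ j ∈ Bᶜ, ∫ ω, ‖v j ω - g‖ ^ 2 ∂μ ≤ #Bᶜ * V := by
              simpa using sum_le_sum fun j (_ : j ∈ Bᶜ) => hvar j
          _ ≤ m * V := by
              gcongr
              exact_mod_cast (card_le_univ Bᶜ).trans_eq (Fintype.card_fin m)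
    _ ≤ _ := by
        rw [← mul_assoc]
        exact mul_le_mul_of_nonneg_right (six_mul_div_le_krum_constant hq) hV

/-- Lemma 1 (classic Byzantine resilience of Krum with explicit constant):
let `2q + 2 < m`, let `v_1, …, v_m` be i.i.d. random vectors in `ℝ^d` with mean `g`
and `E‖v_i - g‖² ≤ V`, and let `ṽ_i = v_i` off a Byzantine set `B` with `|B| ≤ q`
while the `ṽ_i`, `i ∈ B`, are arbitrary random vectors. If `Krum` always outputs an
input vector attaining the minimal Krum score (fixed tie-breaking), then
`E‖Krum(ṽ) - g‖² ≤ (6(m-q) + (4q(m-q-2) + 4q²(m-q-1))/(m-2q-2)) V`. -/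
theorem krum_classic_byzantine_resilient
    {Ω : Type*} [MeasurableSpace Ω] (μ : Measure Ω) [IsProbabilityMeasure μ]
    (m q d : ℕ) (hq : 2 * q + 2 < m)
    (g : EuclideanSpace ℝ (Fin d)) (V : ℝ)
    (v : Fin m → Ω → EuclideanSpace ℝ (Fin d)) (hvmeas : ∀ i, Measurable (v i))
    (hindep : iIndepFun v μ)
    (hident : ∀ i j, IdentDistrib (v i) (v j) μ μ)
    (hL2 : ∀ i, MemLp (v i) 2 μ)
    (hmean : ∀ i, ∫ ω, v i ω ∂μ = g)
    (hvar : ∀ i, ∫ ω, ‖v i ω - g‖ ^ 2 ∂μ ≤ V)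
    (B : Finset (Fin m)) (hB : B.card ≤ q)
    (vt : Fin m → Ω → EuclideanSpace ℝ (Fin d))
    (hvtmeas : ∀ i, AEStronglyMeasurable (vt i) μ)
    (hvt : ∀ i ∉ B, vt i = v i)
    (Krum : (Fin m → EuclideanSpace ℝ (Fin d)) → EuclideanSpace ℝ (Fin d))
    (hKrum : ∀ w, ∃ k : Fin m, Krum w = w k ∧ ∀ i, krumScore q w k ≤ krumScore q w i)
    (hKmeas : AEStronglyMeasurable (fun ω => Krum (fun i => vt i ω)) μ) :
    ∫ ω, ‖Krum (fun i => vt i ω) - g‖ ^ 2 ∂μ ≤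
      (6 * ((m : ℝ) - q) +
        (4 * q * ((m : ℝ) - q - 2) + 4 * (q : ℝ) ^ 2 * ((m : ℝ) - q - 1)) /
          ((m : ℝ) - 2 * q - 2)) * V :=
  krum_classic_byzantine_resilient_general μ m q d hq g V v hL2 hvar B hB vt hvt Krum hKrum
end
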